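/- arXiv:2406.03281 — 4 statements merged into one kernel-verified Lean document; each statement's English description precedes it below -/
import Mathlib

section
/- Let A ∈ ℂ^{n×m} be a block matrix with blocks A₁₁ ∈ ℂ^{n₁×m₁}, A₁₂ ∈ ℂ^{n₁×m₂}, A₂₁ ∈ ℂ^{n₂×m₁}, A₂₂ ∈ ℂ^{n₂×m₂} (n₁+n₂=n, m₁+m₂=m). Assume each column of A₁₁ is not in the span of the other columns of the matrix (A₁₁ A₁₂). If the l-th column of A₂₂ (1 ≤ l ≤ m₂) is not in the span of the other columns of A₂₂, then the (m₁+l)-th column of A is not in the span of the other columns of A. -/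
/-!
Write the column `m₁ + l` of `A` as a combination of the other columns. Projected to the first
`n₁` rows this expresses a column of `A₁₂` through the other columns of `(A₁₁ A₁₂)`; a nonzero
coefficient on a column of `A₁₁` could be solved for, putting that column in the span of the rest.
So only columns of `(A₁₂; A₂₂)` occur, and projecting to the last `n₂` rows puts the `l`-th
column of `A₂₂` in the span of its other columns.
-/

open Submodule Finsupp

variable {K M N ι : Type*} [DivisionRing K] [AddCommGroup M] [Module K M]
  [AddCommGroup N] [Module K N]

theorem Finsupp.mem_span_insert_linearCombination_of_ne_zero (w : ι → M) {c : ι →₀ K} {k : ι}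
    (hk : c k ≠ 0) : w k ∈ span K (insert (linearCombination K w c) (w '' {j | j ≠ k})) := by
  have hsplit : linearCombination K w c = c k • w k + linearCombination K w (c.erase k) := by
    conv_lhs => rw [← single_add_erase k c]
    rw [map_add, linearCombination_single]
  have hrest : linearCombination K w (c.erase k) ∈ span K (w '' {j | j ≠ k}) :=
    (mem_span_image_iff_linearCombination K).2
      ⟨c.erase k, fun j hj hjk => mem_support_iff.1 hj (hjk ▸ erase_same), rfl⟩
  refine mem_span_insert.2 ⟨(c k)⁻¹, -((c k)⁻¹ • linearCombination K w (c.erase k)),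
    neg_mem (smul_mem _ _ hrest), ?_⟩
  rw [hsplit, smul_add, smul_smul, inv_mul_cancel₀ hk, one_smul, add_neg_cancel_right]

theorem mem_span_image_diff_of_notMem_span_map {v : ι → M} (f : M →ₗ[K] N) {i : ι}
    {s : Set ι} (hs : ∀ k ∈ s, f (v k) ∉ span K ((f ∘ v) '' {j | j ≠ k}))
    (h : v i ∈ span K (v '' {j | j ≠ i})) : v i ∈ span K (v '' ({j | j ≠ i} \ s)) := by
  obtain ⟨c, hc, hci⟩ := (mem_span_image_iff_linearCombination K).1 h
  refine (mem_span_image_iff_linearCombination K).2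
    ⟨c, fun k hk => ⟨hc hk, fun hks => hs k hks ?_⟩, hci⟩
  have hki : k ≠ i := hc hk
  refine span_mono ?_ (mem_span_insert_linearCombination_of_ne_zero (f ∘ v) (mem_support_iff.1 hk))
  rw [← apply_linearCombination, hci]
  exact Set.insert_subset (Set.mem_image_of_mem _ hki.symm) subset_rfl

/-- Lemma `matrices`: block matrix `A = [[A₁₁, A₁₂],[A₂₁, A₂₂]]`.
If every column of `A₁₁` is Not-In-Span-Of-Rest w.r.t. `(A₁₁ A₁₂)`, and the `l`-th column
of `A₂₂` is Not-In-Span-Of-Rest w.r.t. `A₂₂`, then the `(m₁+l)`-th column of `A`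
is Not-In-Span-Of-Rest w.r.t. `A`. -/
theorem stmt_3 (n₁ n₂ m₁ m₂ : ℕ)
    (A₁₁ : Matrix (Fin n₁) (Fin m₁) ℂ) (A₁₂ : Matrix (Fin n₁) (Fin m₂) ℂ)
    (A₂₁ : Matrix (Fin n₂) (Fin m₁) ℂ) (A₂₂ : Matrix (Fin n₂) (Fin m₂) ℂ)
    (htop : ∀ j : Fin m₁,
      (fun i : Fin n₁ => A₁₁ i j) ∉
        Submodule.span ℂ
          ((fun j' : Fin m₁ ⊕ Fin m₂ =>
              (fun i : Fin n₁ => Matrix.fromBlocks A₁₁ A₁₂ A₂₁ A₂₂ (Sum.inl i) j'))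
            '' {j' | j' ≠ Sum.inl j}))
    (l : Fin m₂)
    (hbot : (fun i : Fin n₂ => A₂₂ i l) ∉
      Submodule.span ℂ ((fun j' : Fin m₂ => (fun i : Fin n₂ => A₂₂ i j')) '' {j' | j' ≠ l})) :
    (fun i : Fin n₁ ⊕ Fin n₂ => Matrix.fromBlocks A₁₁ A₁₂ A₂₁ A₂₂ i (Sum.inr l)) ∉
      Submodule.span ℂ
        ((fun j' : Fin m₁ ⊕ Fin m₂ =>
            (fun i : Fin n₁ ⊕ Fin n₂ => Matrix.fromBlocks A₁₁ A₁₂ A₂₁ A₂₂ i j'))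
          '' {j' | j' ≠ Sum.inr l}) := by
  intro h
  have hright := mem_span_image_diff_of_notMem_span_map
    (LinearMap.funLeft ℂ ℂ (Sum.inl : Fin n₁ → Fin n₁ ⊕ Fin n₂)) (s := Set.range Sum.inl)
    (by rintro _ ⟨j, rfl⟩; exact htop j) h
  refine hbot (span_mono ?_ (apply_mem_span_image_of_mem_span
    (LinearMap.funLeft ℂ ℂ (Sum.inr : Fin n₂ → Fin n₁ ⊕ Fin n₂)) hright))
  rintro _ ⟨_, ⟨j, ⟨hjl, hj⟩, rfl⟩, rfl⟩
  cases j with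
  | inl j => exact absurd ⟨j, rfl⟩ hj
  | inr j => exact ⟨j, fun hl => hjl (congrArg Sum.inr hl), rfl⟩
end

section
/- Let X ⊂ [-1,1]^d be finite, T ⊂ 𝕋^d finite with X = {cos(2πt) : t ∈ T} (componentwise cosine), and I ⊂ ℕ₀^d finite. Then the Chebyshev matrix C(X,I) = (T_k(x))_{x∈X, k∈I} has full column rank |I| if and only if ker(F(T, M(I))) ∩ Im(B(I)) = {0}, where F(T, M(I)) = (e^{2πi h·t})_{t∈T, h∈M(I)} is the Fourier matrix and B(I) is the mirror-connection matrix. -/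
open Real Complex

/-- The normalized `d`-variate Chebyshev polynomial. -/
noncomputable def chebT {d : ℕ} (k : Fin d → ℕ) (x : Fin d → ℝ) : ℝ :=
  ∏ j, if k j = 0 then 1 else Real.sqrt 2 * Real.cos (k j * Real.arccos (x j))

/-- The mirror set `M({k})` of a single multi-index. -/
def mirror {d : ℕ} (k : Fin d → ℕ) : Finset (Fin d → ℤ) :=
  Finset.image (fun l : Fin d → Bool => fun j => if l j then (k j : ℤ) else -(k j : ℤ))
    Finset.univ

/-- The mirrored index set `M(I) = ⋃_{k ∈ I} M({k})`. -/
def mirrorSet {d : ℕ} (I : Finset (Fin d → ℕ)) : Finset (Fin d → ℤ) :=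
  I.biUnion mirror

/-- The Chebyshev sampling matrix `C(X,I) = (T_k(x))_{x∈X,k∈I}`. -/
noncomputable def chebMatrix {d : ℕ} (X : Finset (Fin d → ℝ)) (I : Finset (Fin d → ℕ)) :
    Matrix {x // x ∈ X} {k // k ∈ I} ℝ :=
  fun x k => chebT (k : Fin d → ℕ) (x : Fin d → ℝ)

/-- The Fourier sampling matrix `F(T,J) = (e^{2πi h·t})_{t∈T,h∈J}`. -/
noncomputable def fourierMatrix {d : ℕ} (T : Finset (Fin d → ℝ)) (J : Finset (Fin d → ℤ)) :
    Matrix {t // t ∈ T} {h // h ∈ J} ℂ :=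
  fun t h => Complex.exp (2 * Real.pi * Complex.I * ∑ j, ((h : Fin d → ℤ) j : ℂ) * ((t : Fin d → ℝ) j : ℂ))

/-- The mirror-connection matrix `B(I)` with entries `2^{-‖k‖₀/2}` for `h ∈ M({k})`
and `0` otherwise. -/
noncomputable def mirrorConMatrix {d : ℕ} (I : Finset (Fin d → ℕ)) :
    Matrix {h // h ∈ mirrorSet I} {k // k ∈ I} ℂ :=
  fun h k =>
    if (h : Fin d → ℤ) ∈ mirror (k : Fin d → ℕ) then
      ((Real.rpow 2 (-((Finset.univ.filter fun j => (k : Fin d → ℕ) j ≠ 0).card : ℝ) / 2) : ℝ) : ℂ)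
    else 0

open Matrix

/-! Coordinatewise `cos (2π k t) = (e^{2πi k t} + e^{-2πi k t}) / 2`, so with `x = cos (2π t)` one
has `T_k(x) = 2^{-‖k‖₀/2} ∑_{h ∈ M({k})} e^{2πi h·t}`: the product `F(T, M(I)) B(I)` is the
complexification of `C(X, I)` with every row repeated once per preimage in `T`. Neither repeating
rows nor complexifying changes whether the kernel is trivial, and `B(I)` is injective (the row of
`M(I)` indexed by `k` itself meets only column `k`), so `ker (F B) = 0` iff
`ker F ∩ im B = 0`. -/

theorem Matrix.rank_eq_card_iff_ker_mulVecLin_eq_bot {m n K : Type*} [Fintype m] [Fintype n]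
    [Field K] (A : Matrix m n K) :
    A.rank = Fintype.card n ↔ LinearMap.ker A.mulVecLin = ⊥ := by
  have h := LinearMap.finrank_range_add_finrank_ker A.mulVecLin
  rw [Module.finrank_fintype_fun_eq_card] at h
  rw [Matrix.rank, ← Submodule.finrank_eq_zero]
  omega

theorem Matrix.ker_mulVecLin_submatrix_of_surjective {l m n R : Type*} [Fintype n]
    [CommSemiring R] (A : Matrix m n R) {g : l → m} (hg : Function.Surjective g) :
    LinearMap.ker (A.submatrix g id).mulVecLin = LinearMap.ker A.mulVecLin := by
  ext v
  change (A *ᵥ v) ∘ g = (0 : m → R) ∘ g ↔ A *ᵥ v = 0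
  exact hg.injective_comp_right.eq_iff

theorem LinearMap.ker_comp_eq_bot_iff_ker_inf_range {R M₁ M₂ M₃ : Type*} [Ring R]
    [AddCommGroup M₁] [AddCommGroup M₂] [AddCommGroup M₃] [Module R M₁] [Module R M₂]
    [Module R M₃] (f : M₂ →ₗ[R] M₃) {g : M₁ →ₗ[R] M₂} (hg : Function.Injective g) :
    LinearMap.ker (f ∘ₗ g) = ⊥ ↔ LinearMap.ker f ⊓ LinearMap.range g = ⊥ := by
  rw [LinearMap.ker_comp, inf_comm, ← Submodule.map_comap_eq, ← Submodule.map_bot g,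
    (Submodule.map_injective_of_injective hg).eq_iff]

theorem Matrix.re_map_ofReal_mulVec {m n : Type*} [Fintype n] (A : Matrix m n ℝ)
    (w : n → ℂ) (i : m) : ((A.map Complex.ofReal *ᵥ w) i).re = (A *ᵥ fun k => (w k).re) i := by
  simp [Matrix.mulVec, dotProduct, Complex.re_sum]

theorem Matrix.im_map_ofReal_mulVec {m n : Type*} [Fintype n] (A : Matrix m n ℝ)
    (w : n → ℂ) (i : m) : ((A.map Complex.ofReal *ᵥ w) i).im = (A *ᵥ fun k => (w k).im) i := by
  simp [Matrix.mulVec, dotProduct, Complex.im_sum]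

theorem Matrix.ker_mulVecLin_map_ofReal_eq_bot_iff {m n : Type*} [Fintype n]
    (A : Matrix m n ℝ) :
    LinearMap.ker (A.map Complex.ofReal).mulVecLin = ⊥ ↔ LinearMap.ker A.mulVecLin = ⊥ := by
  simp only [LinearMap.ker_eq_bot', Matrix.mulVecLin_apply]
  constructor
  · intro h v hv
    have hc : A.map Complex.ofReal *ᵥ (Complex.ofReal ∘ v) = 0 := funext fun i =>
      (RingHom.map_mulVec Complex.ofRealHom A v i).symm.trans (by simp [hv])
    funext k
    simpa using congrFun (h _ hc) k
  · intro h w hw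
    have hre := h (fun k => (w k).re) (funext fun i => by rw [← A.re_map_ofReal_mulVec, hw]; rfl)
    have him := h (fun k => (w k).im) (funext fun i => by rw [← A.im_map_ofReal_mulVec, hw]; rfl)
    funext k
    exact Complex.ext (congrFun hre k) (congrFun him k)

theorem mem_mirror_iff {d : ℕ} {k : Fin d → ℕ} {h : Fin d → ℤ} :
    h ∈ mirror k ↔ ∀ j, h j = k j ∨ h j = -(k j : ℤ) := by
  simp only [mirror, Finset.mem_image, Finset.mem_univ, true_and]
  constructor
  · rintro ⟨l, rfl⟩ j
    cases hl : l j <;> simp [hl]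
  · intro hh
    refine ⟨fun j => decide (h j = k j), funext fun j => ?_⟩
    rcases hh j with hj | hj <;> by_cases hk : h j = k j <;> simp_all

theorem mirror_eq_piFinset {d : ℕ} (k : Fin d → ℕ) :
    mirror k = Fintype.piFinset fun j => ({(k j : ℤ), -(k j : ℤ)} : Finset ℤ) := by
  ext h
  simp [mem_mirror_iff]

theorem natCast_mem_mirror_iff {d : ℕ} {k k' : Fin d → ℕ} :
    (fun j => (k' j : ℤ)) ∈ mirror k ↔ k' = k := by
  simp only [mem_mirror_iff, funext_iff]
  refine forall_congr' fun j => ?_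
  omega

theorem mirror_subset_mirrorSet {d : ℕ} {I : Finset (Fin d → ℕ)} {k : Fin d → ℕ} (hk : k ∈ I) :
    mirror k ⊆ mirrorSet I :=
  Finset.subset_biUnion_of_mem mirror hk

theorem cos_natCast_mul_arccos_cos (n : ℕ) (θ : ℝ) :
    Real.cos (n * Real.arccos (Real.cos θ)) = Real.cos (n * θ) := by
  have hT (φ : ℝ) := Polynomial.Chebyshev.T_real_cos φ n
  push_cast at hT
  rw [← hT, Real.cos_arccos (Real.neg_one_le_cos θ) (Real.cos_le_one θ), hT]

theorem sum_exp_pair_natCast_neg (a : ℕ) (x : ℝ) :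
    ∑ m ∈ ({(a : ℤ), -(a : ℤ)} : Finset ℤ), Complex.exp (2 * π * Complex.I * (m * x)) =
      if a = 0 then 1 else 2 * Real.cos (2 * π * (a * x)) := by
  split_ifs with ha
  · simp [ha]
  rw [Finset.sum_pair (by omega)]
  push_cast
  rw [Complex.cos]
  ring_nf

theorem two_rpow_neg_card_div_two_eq_prod {d : ℕ} (k : Fin d → ℕ) :
    Real.rpow 2 (-((Finset.univ.filter fun j => k j ≠ 0).card : ℝ) / 2) =
      ∏ j, if k j = 0 then 1 else (√2)⁻¹ := by
  rw [Finset.prod_ite, Finset.prod_const_one, Finset.prod_const, one_mul, neg_div,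
    Real.rpow_eq_pow, Real.rpow_neg zero_le_two, Real.rpow_div_two_eq_sqrt _ zero_le_two,
    Real.rpow_natCast, inv_pow]

theorem sum_mirror_exp_eq_prod {d : ℕ} (k : Fin d → ℕ) (t : Fin d → ℝ) :
    ∑ h ∈ mirror k, Complex.exp (2 * π * Complex.I * ∑ j, (h j : ℂ) * (t j : ℂ)) =
      ∏ j, ∑ m ∈ ({(k j : ℤ), -(k j : ℤ)} : Finset ℤ),
        Complex.exp (2 * π * Complex.I * (m * t j)) := by
  rw [mirror_eq_piFinset, Finset.prod_univ_sum]
  refine Finset.sum_congr rfl fun h _ => ?_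
  rw [Finset.mul_sum, Complex.exp_sum]

theorem chebT_cos_eq_mul_sum_mirror {d : ℕ} (k : Fin d → ℕ) (t : Fin d → ℝ) :
    (chebT k (fun j => Real.cos (2 * π * t j)) : ℂ) =
      (Real.rpow 2 (-((Finset.univ.filter fun j => k j ≠ 0).card : ℝ) / 2) : ℂ) *
        ∑ h ∈ mirror k, Complex.exp (2 * π * Complex.I * ∑ j, (h j : ℂ) * (t j : ℂ)) := by
  rw [two_rpow_neg_card_div_two_eq_prod, sum_mirror_exp_eq_prod, chebT, Complex.ofReal_prod,
    Complex.ofReal_prod, ← Finset.prod_mul_distrib]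
  refine Finset.prod_congr rfl fun j _ => ?_
  rw [sum_exp_pair_natCast_neg, ← Complex.ofReal_mul]
  congr 1
  split_ifs
  · simp
  · rw [cos_natCast_mul_arccos_cos]
    field_simp
    rw [Real.sq_sqrt zero_le_two]

theorem fourierMatrix_mul_mirrorConMatrix_apply {d : ℕ} (T : Finset (Fin d → ℝ))
    (I : Finset (Fin d → ℕ)) (t : T) (k : I) :
    (fourierMatrix T (mirrorSet I) * mirrorConMatrix I) t k =
      chebT k (fun j => Real.cos (2 * π * (t : Fin d → ℝ) j)) := by
  rw [Matrix.mul_apply, chebT_cos_eq_mul_sum_mirror, mul_comm, Finset.sum_mul]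
  simp only [fourierMatrix, mirrorConMatrix, mul_ite, mul_zero]
  conv_rhs => rw [← Finset.inter_eq_right.mpr (mirror_subset_mirrorSet k.2), ← Finset.sum_ite_mem]
  rw [Finset.sum_subtype (mirrorSet I) (fun _ => Iff.rfl)]

theorem mirrorConMatrix_mulVecLin_injective {d : ℕ} (I : Finset (Fin d → ℕ)) :
    Function.Injective (mirrorConMatrix I).mulVecLin := by
  rw [← LinearMap.ker_eq_bot, LinearMap.ker_eq_bot']
  intro v hv
  funext k
  have hrow := congrFun hv
    ⟨fun j => (k.1 j : ℤ), mirror_subset_mirrorSet k.2 (natCast_mem_mirror_iff.2 rfl)⟩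
  simp only [mulVecLin_apply, mulVec, dotProduct, Finset.univ_eq_attach, mirrorConMatrix,
    natCast_mem_mirror_iff, SetLike.coe_eq_coe, ite_mul, zero_mul, Finset.sum_ite_eq,
    Finset.mem_attach, if_true, Real.rpow_eq_pow, Pi.zero_apply, mul_eq_zero,
    Complex.ofReal_eq_zero] at hrow
  exact hrow.resolve_left (by positivity)

/-- Lemma `C_full_crank`: with `X = Cos(T)`, the Chebyshev matrix `C(X,I)`
has full column rank `|I|` iff `ker(F(T,M(I))) ∩ Im(B(I)) = {0}`. -/
theorem stmt_8 {d : ℕ} (T : Finset (Fin d → ℝ)) (X : Finset (Fin d → ℝ))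
    (I : Finset (Fin d → ℕ))
    (hX : X = @Finset.image _ _ (Classical.decEq _)
      (fun t : Fin d → ℝ => fun j => Real.cos (2 * Real.pi * t j)) T) :
    (chebMatrix X I).rank = I.card ↔
      LinearMap.ker (fourierMatrix T (mirrorSet I)).mulVecLin
        ⊓ LinearMap.range (mirrorConMatrix I).mulVecLin = ⊥ := by
  have hmemX (x : Fin d → ℝ) : x ∈ X ↔ ∃ t ∈ T, (fun j => Real.cos (2 * π * t j)) = x := by
    simp only [hX, Finset.mem_image]
  let g (t : T) : X := ⟨_, (hmemX _).2 ⟨t, t.2, rfl⟩⟩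
  have hg : Function.Surjective g := fun x =>
    let ⟨t, ht, hx⟩ := (hmemX x).1 x.2
    ⟨⟨t, ht⟩, Subtype.ext hx⟩
  have hFB : fourierMatrix T (mirrorSet I) * mirrorConMatrix I =
      ((chebMatrix X I).submatrix g id).map Complex.ofReal := by
    ext t k
    exact fourierMatrix_mul_mirrorConMatrix_apply T I t k
  rw [← Fintype.card_coe I, Matrix.rank_eq_card_iff_ker_mulVecLin_eq_bot,
    ← Matrix.ker_mulVecLin_submatrix_of_surjective (chebMatrix X I) hg,
    ← Matrix.ker_mulVecLin_map_ofReal_eq_bot_iff, ← hFB, Matrix.mulVecLin_mul,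
    LinearMap.ker_comp_eq_bot_iff_ker_inf_range _ (mirrorConMatrix_mulVecLin_injective I)]
end

section
/- Let T ⊂ 𝕋^d, |T| < ∞, and I ⊂ ℕ₀^d, |I| < ∞. Denote by a_h, h ∈ M(I), the columns of F(T, M(I)) and by c_k, k ∈ I, the columns of C(Cos(T), I). If a_h ∉ span{a_l : l ∈ M(I) \ {h}}, then c_{|h|} ∉ span{c_l : l ∈ I \ {|h|}}. -/
open Real Complex

/-!
Sampling at the points `cos (2π t)`, `t ∈ T`, and complexifying is a real-linear map sending the
Chebyshev column `c_k` to `(∏ⱼ w(kⱼ)) • ∑_b a_{σ_b k}`, where `σ_b k` runs over the mirror images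
`M({k})` of `k`, each hit as often as the sign patterns `b` allow. Since `|σ_b k| = k`, the mirror
images of every `k ≠ |h|` avoid `h`, while `h` itself is hit by some `b` for `k = |h|`. So a real
relation expressing `c_{|h|}` by the other columns of `C` maps to a complex relation expressing a
nonzero multiple of `a_h` by the other columns of `F`.
-/

open Finset

section LinearAlgebra

variable {R K V W ι : Type*} [CommSemiring R] [Field K] [Algebra R K]
  [AddCommMonoid V] [Module R V] [AddCommGroup W] [Module K W] [Module R W] [IsScalarTower R K W]

theorem Submodule.sum_sub_card_smul_mem_span {β : Type*} [Fintype β] [DecidableEq ι]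
    (v : ι → W) (f : β → ι) (i₀ : ι) :
    ∑ b, v (f b) - (#{b | f b = i₀} : K) • v i₀ ∈ span K (v '' {i | i ≠ i₀}) := by
  rw [← sum_filter_add_sum_filter_not univ (fun b => f b = i₀),
    sum_congr rfl fun b hb => by rw [(mem_filter.1 hb).2], sum_const, Nat.cast_smul_eq_nsmul,
    add_sub_cancel_left]
  exact Submodule.sum_mem _ fun b hb => subset_span ⟨f b, (mem_filter.1 hb).2, rfl⟩

theorem notMem_span_image_of_map_sub_smul_mem (Φ : V →ₗ[R] W) (c : ι → V) (μ : ι → K)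
    {x : W} {S : Submodule K W} (hx : x ∉ S) (hΦ : ∀ i, Φ (c i) - μ i • x ∈ S)
    {i₀ : ι} (hμ₀ : μ i₀ ≠ 0) (hμ : ∀ i ≠ i₀, μ i = 0) :
    c i₀ ∉ Submodule.span R (c '' {i | i ≠ i₀}) := by
  intro hc
  have hle : Submodule.span R (c '' {i | i ≠ i₀}) ≤ (S.restrictScalars R).comap Φ :=
    Submodule.span_le.2 <| by
      rintro _ ⟨i, hi, rfl⟩
      simpa [hμ i hi] using hΦ i
  have hΦc : Φ (c i₀) ∈ S := hle hc
  have hμx : μ i₀ • x ∈ S := by simpa using S.sub_mem hΦc (hΦ i₀)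
  exact hx ((S.smul_mem_iff hμ₀).1 hμx)

end LinearAlgebra

theorem Real.cos_intCast_mul_arccos_cos (n : ℤ) (θ : ℝ) :
    Real.cos (n * Real.arccos (Real.cos θ)) = Real.cos (n * θ) := by
  rw [← Polynomial.Chebyshev.T_real_cos,
    Real.cos_arccos (Real.neg_one_le_cos θ) (Real.cos_le_one θ), Polynomial.Chebyshev.T_real_cos]

section Chebyshev

variable {d : ℕ}

def signedIndex (b : Fin d → Bool) (k : Fin d → ℕ) : Fin d → ℤ :=
  fun j => if b j then (k j : ℤ) else -(k j : ℤ)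

theorem signedIndex_mem_mirrorSet {I : Finset (Fin d → ℕ)} {k : Fin d → ℕ} (hk : k ∈ I)
    (b : Fin d → Bool) : signedIndex b k ∈ mirrorSet I :=
  mem_biUnion.2 ⟨k, hk, mem_image.2 ⟨b, mem_univ _, rfl⟩⟩

theorem natAbs_signedIndex (b : Fin d → Bool) (k : Fin d → ℕ) :
    (fun j => (signedIndex b k j).natAbs) = k := by
  funext j
  unfold signedIndex
  split <;> simp

theorem exists_signedIndex_natAbs_eq (h : Fin d → ℤ) :
    ∃ b, signedIndex b (fun j => (h j).natAbs) = h :=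
  ⟨fun j => decide (0 ≤ h j), funext fun j => by
    unfold signedIndex
    by_cases hj : 0 ≤ h j
    · simp [hj]
    · simp [hj, abs_of_neg (not_le.1 hj)]⟩

/-- `T₀ = 1 = (e⁰ + e⁰) / 2` and `√2 cos (k θ) = (√2 / 2) (e^{ikθ} + e^{-ikθ})`. -/
noncomputable def chebWeight (k : ℕ) : ℂ :=
  if k = 0 then 1 / 2 else Real.sqrt 2 / 2

theorem chebWeight_ne_zero (k : ℕ) : chebWeight k ≠ 0 := by
  unfold chebWeight
  split <;> simp

theorem chebFactor_cos_eq_sum_exp (k : ℕ) (s : ℝ) :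
    (((if k = 0 then 1 else Real.sqrt 2 * Real.cos (k * Real.arccos (Real.cos (2 * π * s)))) :
        ℝ) : ℂ) =
      chebWeight k * ∑ β : Bool,
        exp (2 * π * I * (((if β then (k : ℤ) else -(k : ℤ) : ℤ) : ℂ) * s)) := by
  have hcos := Real.cos_intCast_mul_arccos_cos k (2 * π * s)
  push_cast at hcos
  simp only [Fintype.sum_bool, if_true, Bool.false_eq_true, if_false, chebWeight]
  split_ifs with hk
  · simp [hk]
    norm_num
  · rw [hcos, Complex.ofReal_mul, Complex.ofReal_cos, Complex.cos]
    push_cast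
    ring_nf

theorem chebT_cos_eq_sum_exp (k : Fin d → ℕ) (t : Fin d → ℝ) :
    (chebT k (fun j => Real.cos (2 * π * t j)) : ℂ) =
      (∏ j, chebWeight (k j)) *
        ∑ b : Fin d → Bool, exp (2 * π * I * ∑ j, (signedIndex b k j : ℂ) * t j) := by
  have hexp_sum (b : Fin d → Bool) :
      exp (2 * π * I * ∑ j, (signedIndex b k j : ℂ) * t j) =
        ∏ j, exp (2 * π * I * (((if b j then (k j : ℤ) else -(k j : ℤ) : ℤ) : ℂ) * t j)) := by
    rw [mul_sum, Complex.exp_sum]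
    rfl
  simp_rw [hexp_sum]
  rw [← Fintype.prod_sum (fun j (β : Bool) =>
      exp (2 * π * I * (((if β then (k j : ℤ) else -(k j : ℤ) : ℤ) : ℂ) * t j))),
    ← prod_mul_distrib, chebT, Complex.ofReal_prod]
  exact prod_congr rfl fun j _ => chebFactor_cos_eq_sum_exp (k j) (t j)

end Chebyshev

section Sampling

variable {d : ℕ}

noncomputable def cosPullback {T X : Finset (Fin d → ℝ)}
    (hTX : ∀ t ∈ T, (fun j => Real.cos (2 * π * t j)) ∈ X) :
    ({x // x ∈ X} → ℝ) →ₗ[ℝ] ({t // t ∈ T} → ℂ) :=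
  (LinearMap.compLeft (Algebra.linearMap ℝ ℂ) _).comp
    (LinearMap.funLeft ℝ ℝ fun t => ⟨_, hTX t.1 t.2⟩)

theorem cosPullback_chebMatrix_col {T X : Finset (Fin d → ℝ)}
    (hTX : ∀ t ∈ T, (fun j => Real.cos (2 * π * t j)) ∈ X) {I : Finset (Fin d → ℕ)}
    (k : {k // k ∈ I}) :
    cosPullback hTX (fun x => chebMatrix X I x k) =
      (∏ j, chebWeight (k.1 j)) • ∑ b : Fin d → Bool, fun t =>
        fourierMatrix T (mirrorSet I) t ⟨signedIndex b k, signedIndex_mem_mirrorSet k.2 b⟩ := by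
  funext t
  simp only [Pi.smul_apply, Finset.sum_apply, smul_eq_mul]
  exact chebT_cos_eq_sum_exp k.1 t.1

end Sampling

/-- Lemma `C_linear independent_columns`: if the column `a_h` of
`F(T,M(I))` is not in the span of the other columns, then the column `c_{|h|}` of
`C(Cos(T),I)` is not in the span of the other columns. -/
theorem stmt_10 {d : ℕ} (T : Finset (Fin d → ℝ)) (X : Finset (Fin d → ℝ))
    (I : Finset (Fin d → ℕ))
    (hX : X = @Finset.image _ _ (Classical.decEq _)
      (fun t : Fin d → ℝ => fun j => Real.cos (2 * Real.pi * t j)) T)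
    (h : Fin d → ℤ) (hh : h ∈ mirrorSet I) (habs : (fun j => (h j).natAbs) ∈ I)
    (hNISOR : (fun t : {t // t ∈ T} => fourierMatrix T (mirrorSet I) t ⟨h, hh⟩) ∉
      Submodule.span ℂ
        ((fun l : {l // l ∈ mirrorSet I} =>
            (fun t : {t // t ∈ T} => fourierMatrix T (mirrorSet I) t l))
          '' {l | l ≠ ⟨h, hh⟩})) :
    (fun x : {x // x ∈ X} => chebMatrix X I x ⟨fun j => (h j).natAbs, habs⟩) ∉
      Submodule.span ℝ
        ((fun l : {l // l ∈ I} => (fun x : {x // x ∈ X} => chebMatrix X I x l))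
          '' {l | l ≠ ⟨fun j => (h j).natAbs, habs⟩}) := by
  have hTX : ∀ t ∈ T, (fun j => Real.cos (2 * π * t j)) ∈ X := fun t ht => by
    simp only [hX, mem_image]
    exact ⟨t, ht, rfl⟩
  let σ (k : {k // k ∈ I}) (b : Fin d → Bool) : {l // l ∈ mirrorSet I} :=
    ⟨signedIndex b k, signedIndex_mem_mirrorSet k.2 b⟩
  let μ (k : {k // k ∈ I}) : ℂ := (∏ j, chebWeight (k.1 j)) * #{b | σ k b = ⟨h, hh⟩}
  refine notMem_span_image_of_map_sub_smul_mem (cosPullback hTX) _ μ hNISOR (fun k => ?_) ?_ ?_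
  · rw [cosPullback_chebMatrix_col, mul_smul, ← smul_sub]
    exact Submodule.smul_mem _ _ (Submodule.sum_sub_card_smul_mem_span _ (σ k) _)
  · obtain ⟨b, hb⟩ := exists_signedIndex_natAbs_eq h
    refine mul_ne_zero (prod_ne_zero_iff.2 fun j _ => chebWeight_ne_zero _) ?_
    exact Nat.cast_ne_zero.2 (card_ne_zero.2 ⟨b, by simp [σ, hb]⟩)
  · intro k hk
    suffices #{b | σ k b = ⟨h, hh⟩} = 0 by simp [μ, this]
    refine card_eq_zero.2 (filter_eq_empty_iff.2 fun b _ hb => hk (Subtype.ext ?_))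
    rw [← natAbs_signedIndex b k.1]
    exact congrArg (fun m : Fin d → ℤ => fun j => (m j).natAbs) (congrArg Subtype.val hb)
end

section
/- Fix k ∈ I ⊂ ℕ₀^d with |I| < ∞, and let M be a prime number such that the componentwise reduction mod M is injective on the mirrored set M(I). If a generating vector z is drawn uniformly at random from {0,...,M-1}^d, then the probability that there exists h ∈ M(I) \ {k} with k·z ≡ h·z (mod M) is at most (|M(I)| - 1)/M. -/
open Finset

lemma natCast_mem_mirrorSet {d : ℕ} {I : Finset (Fin d → ℕ)} {k : Fin d → ℕ} (hk : k ∈ I) :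
    (fun j => (k j : ℤ)) ∈ mirrorSet I :=
  mem_biUnion.mpr ⟨k, hk, mem_image.mpr ⟨fun _ => true, mem_univ _, rfl⟩⟩

lemma exists_not_dvd_sub_of_injOn_emod {ι : Type*} {n : ℤ} {S : Set (ι → ℤ)}
    (hinj : Set.InjOn (fun h : ι → ℤ => fun i => h i % n) S) {h k : ι → ℤ}
    (hh : h ∈ S) (hk : k ∈ S) (hne : h ≠ k) : ∃ i, ¬ n ∣ h i - k i := by
  by_contra! hdvd
  exact hne <| hinj hh hk <| funext fun i => (Int.modEq_iff_dvd.mpr (hdvd i)).symm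

lemma Fin.eq_of_intCast_dvd_sub {p : ℕ} {x y : Fin p} (h : (p : ℤ) ∣ (x : ℤ) - y) : x = y :=
  Fin.ext ((Nat.modEq_iff_dvd.mpr h).symm.eq_of_lt_of_lt x.2 y.2)

section AliasingCount

variable {ι : Type*} [Fintype ι] [DecidableEq ι] {p : ℕ}

lemma card_filter_dvd_linear_mul_le (hp : p.Prime) (a : ι → ℤ) {i₀ : ι}
    (ha : ¬ (p : ℤ) ∣ a i₀) :
    #{z : ι → Fin p | (p : ℤ) ∣ ∑ i, a i * z i} * p ≤ p ^ Fintype.card ι := by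
  have hinj : Set.InjOn (fun (z : ι → Fin p) (i : {i // i ≠ i₀}) => z i)
      ({z : ι → Fin p | (p : ℤ) ∣ ∑ i, a i * z i} : Finset (ι → Fin p)) := by
    intro z hz w hw hzw
    rw [mem_coe, mem_filter] at hz hw
    have hoff : ∀ i ≠ i₀, z i = w i := fun i hi => congrFun hzw ⟨i, hi⟩
    have hsub : (∑ i, a i * z i) - ∑ i, a i * w i = a i₀ * ((z i₀ : ℤ) - w i₀) := by
      rw [← sum_sub_distrib, sum_eq_single i₀ (fun i _ hi => by rw [hoff i hi, sub_self])
        (fun h => absurd (mem_univ i₀) h)]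
      ring
    have hdvd : (p : ℤ) ∣ a i₀ * ((z i₀ : ℤ) - w i₀) := hsub ▸ dvd_sub hz.2 hw.2
    have hz₀ : z i₀ = w i₀ :=
      Fin.eq_of_intCast_dvd_sub (((Nat.prime_iff_prime_int.mp hp).dvd_mul.mp hdvd).resolve_left ha)
    funext i
    by_cases hi : i = i₀
    · exact hi ▸ hz₀
    · exact hoff i hi
  have hcard : Fintype.card {i // i ≠ i₀} + 1 = Fintype.card ι := by
    rw [Fintype.card_subtype_compl, Fintype.card_subtype_eq]
    exact Nat.sub_add_cancel (Fintype.card_pos_iff.mpr ⟨i₀⟩)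
  calc #{z : ι → Fin p | (p : ℤ) ∣ ∑ i, a i * z i} * p
      ≤ Fintype.card ({i // i ≠ i₀} → Fin p) * p :=
        Nat.mul_le_mul_right p (card_le_card_of_injOn _ (fun _ _ => mem_univ _) hinj)
    _ = p ^ Fintype.card ι := by rw [Fintype.card_fun, Fintype.card_fin, ← pow_succ, hcard]

lemma card_filter_exists_dvd_mul_le (hp : p.Prime) {S : Finset (ι → ℤ)} {k : ι → ℤ}
    (hk : k ∈ S) (hS : ∀ h ∈ S, h ≠ k → ∃ i, ¬ (p : ℤ) ∣ h i - k i) :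
    #{z : ι → Fin p | ∃ h ∈ S, h ≠ k ∧ (p : ℤ) ∣ ∑ i, (h i - k i) * z i} * p ≤
      (#S - 1) * p ^ Fintype.card ι := by
  have hcover : ({z : ι → Fin p | ∃ h ∈ S, h ≠ k ∧ (p : ℤ) ∣ ∑ i, (h i - k i) * z i} :
      Finset (ι → Fin p)) ⊆
      (S.erase k).biUnion fun h => {z : ι → Fin p | (p : ℤ) ∣ ∑ i, (h i - k i) * z i} := by
    intro z hz
    obtain ⟨h, hh, hne, hdvd⟩ := (mem_filter.mp hz).2
    exact mem_biUnion.mpr ⟨h, mem_erase.mpr ⟨hne, hh⟩, mem_filter.mpr ⟨mem_univ _, hdvd⟩⟩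
  calc #{z : ι → Fin p | ∃ h ∈ S, h ≠ k ∧ (p : ℤ) ∣ ∑ i, (h i - k i) * z i} * p
      ≤ (∑ h ∈ S.erase k, #{z : ι → Fin p | (p : ℤ) ∣ ∑ i, (h i - k i) * z i}) * p :=
        Nat.mul_le_mul_right p ((card_le_card hcover).trans card_biUnion_le)
    _ ≤ ∑ _h ∈ S.erase k, p ^ Fintype.card ι := by
        rw [sum_mul]
        refine sum_le_sum fun h hh => ?_
        obtain ⟨hne, hhS⟩ := mem_erase.mp hh
        obtain ⟨i₀, hi₀⟩ := hS h hhS hne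
        exact card_filter_dvd_linear_mul_le hp _ hi₀
    _ = (#S - 1) * p ^ Fintype.card ι := by rw [sum_const, smul_eq_mul, card_erase_of_mem hk]

end AliasingCount

/-- Lemma `count_aliasing_probability_cheb`: fix `k ∈ I` and a prime `M`
such that reduction mod `M` is injective on the mirrored set `M(I)`. For `z` drawn
uniformly from `{0,…,M-1}^d`, the probability that `k` aliases to some other frequency
of `M(I)` is at most `(|M(I)|-1)/M`; equivalently, the number of such `z` times `M` is
at most `(|M(I)|-1)·M^d`. -/
theorem stmt_14 {d : ℕ} (I : Finset (Fin d → ℕ)) (k : Fin d → ℕ) (hk : k ∈ I)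
    (M : ℕ) (hM : Nat.Prime M)
    (hinj : Set.InjOn (fun h : Fin d → ℤ => fun i => h i % (M : ℤ)) (mirrorSet I)) :
    (Finset.univ.filter fun z : Fin d → Fin M =>
        ∃ h ∈ mirrorSet I, h ≠ (fun j => (k j : ℤ)) ∧
          ((M : ℤ) ∣ ∑ i, (h i - (k i : ℤ)) * (z i : ℤ))).card * M ≤
      ((mirrorSet I).card - 1) * M ^ d := by
  have hk' := natCast_mem_mirrorSet hk
  simpa only [Fintype.card_fin] using card_filter_exists_dvd_mul_le hM hk'
    fun h hh hne => exists_not_dvd_sub_of_injOn_emod hinj hh hk' hne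
end
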